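/- Suppose U ξ = r·ξ with r ∈ ℂ, |r| = 1. Let μ ∈ ℂ satisfy μ² = a²·(r+1)² − 4r, and set λ = (a·(r+1) + μ)/2 and k = (a·(r−1) + μ)/(2‖ξ‖²). Then T(k·ξ, 1) = λ·(k·ξ, 1); that is, (k·ξ, 1) is an eigenvector of T with eigenvalue λ. -/
import Mathlib


open scoped InnerProductSpace

noncomputable section

variable {H : Type*} [NormedAddCommGroup H] [InnerProductSpace ℂ H]

/-- The vector `(x, z)` of the Hilbert space direct sum `H ⊕ ℂ`. -/
def mkE (x : H) (z : ℂ) : WithLp 2 (H × ℂ) := (WithLp.equiv 2 (H × ℂ)).symm (x, z)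

/-- With `ξ ≠ 0`, `a = √(1 + ‖ξ‖²)`, `A x = x + ((a−1)/‖ξ‖²)·⟨x,ξ⟩·ξ`, `U` unitary with
`U ξ = r·ξ`, `|r| = 1`, and `T(x,z) = (U(A x) + z·U ξ, ⟨x,ξ⟩ + a·z)`: if `μ² = a²(r+1)² − 4r`,
`λ = (a(r+1) + μ)/2` and `k = (a(r−1) + μ)/(2‖ξ‖²)`, then `(k·ξ, 1)` is an eigenvector of `T`
with eigenvalue `λ`.
(The paper's inner product `⟨x,y⟩` is linear in the first slot, i.e. `⟪y,x⟫_ℂ` in Mathlib's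
convention.) -/
theorem stmt7 [CompleteSpace H]
    (ξ : H) (hξ : ξ ≠ 0) (a : ℝ) (ha : a = Real.sqrt (1 + ‖ξ‖ ^ 2))
    (A : H →L[ℂ] H)
    (hA : ∀ x : H, A x = x + ((((a - 1) / ‖ξ‖ ^ 2 : ℝ) : ℂ) * ⟪ξ, x⟫_ℂ) • ξ)
    (U : H →L[ℂ] H) (hU : U ∈ unitary (H →L[ℂ] H))
    (r : ℂ) (hr : ‖r‖ = 1) (hUξ : U ξ = r • ξ)
    (T : WithLp 2 (H × ℂ) →L[ℂ] WithLp 2 (H × ℂ))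
    (hT : ∀ (x : H) (z : ℂ),
      T (mkE x z) = mkE (U (A x) + z • U ξ) (⟪ξ, x⟫_ℂ + (a : ℂ) * z))
    (μ : ℂ) (hμ : μ ^ 2 = (a : ℂ) ^ 2 * (r + 1) ^ 2 - 4 * r)
    (lam k : ℂ) (hlam : lam = ((a : ℂ) * (r + 1) + μ) / 2)
    (hk : k = ((a : ℂ) * (r - 1) + μ) / (2 * (‖ξ‖ : ℂ) ^ 2)) :
    T (mkE (k • ξ) 1) = lam • mkE (k • ξ) 1 := by
  have hn : (‖ξ‖ : ℂ) ≠ 0 := by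
    exact_mod_cast (norm_ne_zero_iff.mpr hξ)
  have hn2 : (‖ξ‖ : ℂ) ^ 2 ≠ 0 := pow_ne_zero _ hn
  have ha2 : (a : ℂ) ^ 2 = 1 + (‖ξ‖ : ℂ) ^ 2 := by
    have : a ^ 2 = 1 + ‖ξ‖ ^ 2 := by
      rw [ha]; exact Real.sq_sqrt (by positivity)
    exact_mod_cast congrArg Complex.ofReal this
  have hinner : ⟪ξ, k • ξ⟫_ℂ = k * (‖ξ‖ : ℂ) ^ 2 := by
    rw [inner_smul_right, inner_self_eq_norm_sq_to_K]
    norm_cast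
  have hAk : A (k • ξ) = (k * a) • ξ := by
    rw [hA, hinner, ← add_smul]
    congr 1
    push_cast
    field_simp
    ring
  have hUAk : U (A (k • ξ)) = (k * a * r) • ξ := by
    rw [hAk, map_smul, hUξ, smul_smul]
  have eq1 : k * (‖ξ‖ : ℂ) ^ 2 + (a : ℂ) = lam := by
    rw [hk, hlam]
    field_simp
    ring
  have hk2 : k * (2 * (‖ξ‖ : ℂ) ^ 2) = (a : ℂ) * (r - 1) + μ := by
    rw [hk]; field_simp
  have hlam2 : lam * 2 = (a : ℂ) * (r + 1) + μ := by
    rw [hlam]; field_simp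
  have eq2 : k * a * r + r = lam * k := by
    apply mul_right_cancel₀ (b := 4 * (‖ξ‖ : ℂ) ^ 2)
      (mul_ne_zero (by norm_num) hn2)
    linear_combination (2 * (a : ℂ) * r - lam * 2) * hk2 -
      ((a : ℂ) * (r - 1) + μ) * hlam2 - hμ - (4 * r) * ha2
  rw [hT, hUAk, hUξ]
  have hfst : (k * a * r) • ξ + (1 : ℂ) • r • ξ = (lam * k) • ξ := by
    rw [one_smul, ← add_smul, eq2]
  have hsnd : ⟪ξ, k • ξ⟫_ℂ + (a : ℂ) * 1 = lam * 1 := by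
    rw [hinner, mul_one, mul_one, eq1]
  rw [hfst, hsnd]
  show mkE ((lam * k) • ξ) (lam * 1) = lam • mkE (k • ξ) 1
  rw [mul_smul]
  rfl

end
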